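/- arXiv:2406.13569 — 5 statements merged into one kernel-verified Lean document; each statement's English description precedes it below -/
import Mathlib

section
/- If C is a deterministic channel (a 0-1 stochastic matrix with no all-zero columns in the product) and D is a channel such that the matrix product C·D is defined, then the Bayes' capacity of C·D equals the Bayes' capacity of D, where the Bayes' capacity of a channel M : X × Y → [0,1] is defined as ∑_{y∈Y} max_{x∈X} M_{x,y}. -/
open Finset

/-- Bayes' capacity is invariant under deterministic pre-processing. -/
theorem bayes_capacity_deterministic_preprocessing
    {X Z Y : Type*} [Fintype X] [Fintype Z] [Fintype Y]
    [Nonempty X] [Nonempty Z] [Nonempty Y]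
    (C : X → Z → ℝ) (D : Z → Y → ℝ)
    (hC01 : ∀ x z, C x z = 0 ∨ C x z = 1)
    (hCrow : ∀ x, ∑ z, C x z = 1)
    (hCcol : ∀ z, ∃ x, C x z ≠ 0)
    (hD0 : ∀ z y, 0 ≤ D z y)
    (hDrow : ∀ z, ∑ y, D z y = 1) :
    ∑ y, ⨆ x, ∑ z, C x z * D z y = ∑ y, ⨆ z, D z y := by
  classical
  -- each row of C has exactly one 1
  have hex : ∀ x, ∃ z, C x z = 1 := by
    intro x
    by_contra h
    push_neg at h
    have : ∑ z, C x z = 0 :=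
      Finset.sum_eq_zero (fun z _ => (hC01 x z).resolve_right (h z))
    rw [hCrow x] at this; norm_num at this
  have huniq : ∀ x z₁ z₂, C x z₁ = 1 → C x z₂ = 1 → z₁ = z₂ := by
    intro x z₁ z₂ h1 h2
    by_contra hne
    have hsub : ({z₁, z₂} : Finset Z) ⊆ Finset.univ := Finset.subset_univ _
    have hle : ∑ z ∈ ({z₁, z₂} : Finset Z), C x z ≤ ∑ z, C x z := by
      apply Finset.sum_le_sum_of_subset_of_nonneg hsub
      intro z _ _
      rcases hC01 x z with h | h <;> simp [h]
    rw [Finset.sum_pair hne, h1, h2, hCrow x] at hle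
    norm_num at hle
  set f : X → Z := fun x => (hex x).choose with hf
  have hf1 : ∀ x, C x (f x) = 1 := fun x => (hex x).choose_spec
  have hsurj : Function.Surjective f := by
    intro z
    obtain ⟨x, hx⟩ := hCcol z
    have : C x z = 1 := (hC01 x z).resolve_left hx
    exact ⟨x, huniq x (f x) z (hf1 x) this⟩
  have hrow : ∀ x y, ∑ z, C x z * D z y = D (f x) y := by
    intro x y
    have : ∀ z ∈ Finset.univ, C x z * D z y = if z = f x then D z y else 0 := by
      intro z _
      by_cases hz : z = f x
      · simp [hz, hf1 x]
      · have : C x z = 0 := by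
          rcases hC01 x z with h | h
          · exact h
          · exact absurd (huniq x z (f x) h (hf1 x)) hz
        simp [hz, this]
    rw [Finset.sum_congr rfl this, Finset.sum_ite_eq' Finset.univ (f x) (fun z => D z y)]
    simp
  apply Finset.sum_congr rfl
  intro y _
  calc ⨆ x, ∑ z, C x z * D z y = ⨆ x, D (f x) y := by
        exact iSup_congr (fun x => hrow x y)
    _ = ⨆ z, D z y := by
        have hr : Set.range (fun x => D (f x) y) = Set.range (fun z => D z y) :=
          hsurj.range_comp (fun z => D z y)
        simp only [iSup]; rw [hr]
end

section
/- For any prior π on finite X and any nonnegative gain function g : W × X → ℝ≥0 with V_prior(π) > 0, the multiplicative leakage L_g(π, M) = V_post(π, M)/V_prior(π) of a channel M is at most the Bayes' capacity C_Bayes(M) = ∑_{y} max_x M_{x,y}. -/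
open Finset

/-- The multiplicative g-leakage of a channel is at most its Bayes' capacity,
for any prior and any nonnegative gain function with positive prior vulnerability. -/
theorem leakage_le_bayes_capacity
    {X Y W : Type*} [Fintype X] [Fintype Y] [Fintype W]
    [Nonempty X] [Nonempty Y] [Nonempty W]
    (M : X → Y → ℝ) (pr : X → ℝ) (g : W → X → ℝ)
    (hM0 : ∀ x y, 0 ≤ M x y) (hMrow : ∀ x, ∑ y, M x y = 1)
    (hpr0 : ∀ x, 0 ≤ pr x) (hpr1 : ∑ x, pr x = 1)
    (hg : ∀ w x, 0 ≤ g w x)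
    (hV : 0 < ⨆ w, ∑ x, pr x * g w x) :
    (∑ y, ⨆ w, ∑ x, pr x * M x y * g w x) / (⨆ w, ∑ x, pr x * g w x)
      ≤ ∑ y, ⨆ x, M x y := by
  set V : ℝ := ⨆ w, ∑ x, pr x * g w x with hVdef
  rw [div_le_iff₀ hV]
  have hkey : ∀ y : Y, (⨆ w, ∑ x, pr x * M x y * g w x) ≤ (⨆ x, M x y) * V := by
    intro y
    have hbM : BddAbove (Set.range fun x => M x y) := Set.Finite.bddAbove (Set.finite_range _)
    have hMle : ∀ x, M x y ≤ ⨆ x', M x' y := fun x => le_ciSup hbM x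
    have hMsup0 : 0 ≤ ⨆ x, M x y := le_trans (hM0 (Classical.arbitrary X) y)
      (hMle (Classical.arbitrary X))
    apply ciSup_le
    intro w
    have h1 : ∑ x, pr x * M x y * g w x ≤ (⨆ x', M x' y) * ∑ x, pr x * g w x := by
      rw [Finset.mul_sum]
      apply Finset.sum_le_sum
      intro x _
      have : pr x * M x y * g w x ≤ pr x * (⨆ x', M x' y) * g w x := by
        apply mul_le_mul_of_nonneg_right _ (hg w x)
        exact mul_le_mul_of_nonneg_left (hMle x) (hpr0 x)
      linarith [this]
    have h2 : ∑ x, pr x * g w x ≤ V := by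
      apply le_ciSup (Set.Finite.bddAbove (Set.finite_range _)) w
    calc ∑ x, pr x * M x y * g w x ≤ (⨆ x', M x' y) * ∑ x, pr x * g w x := h1
      _ ≤ (⨆ x', M x' y) * V := mul_le_mul_of_nonneg_left h2 hMsup0
  calc ∑ y, ⨆ w, ∑ x, pr x * M x y * g w x ≤ ∑ y, (⨆ x, M x y) * V :=
        Finset.sum_le_sum fun y _ => hkey y
    _ = (∑ y, ⨆ x, M x y) * V := by rw [Finset.sum_mul]
end

section
/- Let σ > 0, R > 0, p ≥ 1, and define g : ℝ^p → ℝ by g(y) = (2πσ²)^{-p/2} exp(-(max(‖y‖ - R, 0))²/(2σ²)) (the pointwise supremum of Gaussian densities with centers in the ball B_R). Then ∫_{ℝ^p} g = (1/(2πσ²)^{p/2})·V(B_R^p) + (1/(2πσ²)^{p/2})·A(S^{p-1})·(1/2)∑_{i=0}^{p-1} Γ((p-i)/2)(√2σ)^{p-i} C(p-1,i) R^i, where V(B_R^p) = π^{p/2} R^p / Γ(p/2+1) and A(S^{p-1}) = 2π^{p/2}/Γ(p/2). -/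
open Real Finset

open Set MeasureTheory


lemma gauss_moment (σ : ℝ) (hσ : 0 < σ) (k : ℕ) :
    ∫ t in Ioi (0:ℝ), t ^ k * Real.exp (-t ^ 2 / (2 * σ ^ 2)) =
      Real.Gamma (((k:ℝ) + 1) / 2) * (Real.sqrt 2 * σ) ^ (k + 1) * (1 / 2) := by
  have hb : (0:ℝ) < (2 * σ ^ 2)⁻¹ := by positivity
  have hk : (-1:ℝ) < (k:ℝ) := by
    have := Nat.cast_nonneg (α := ℝ) k; linarith
  have h := integral_rpow_mul_exp_neg_mul_rpow (p := 2) (q := (k:ℝ)) (b := (2 * σ ^ 2)⁻¹)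
    two_pos hk hb
  have hcong : ∫ t in Ioi (0:ℝ), t ^ k * Real.exp (-t ^ 2 / (2 * σ ^ 2)) =
      ∫ x in Ioi (0:ℝ), x ^ (k:ℝ) * Real.exp (-(2 * σ ^ 2)⁻¹ * x ^ (2:ℝ)) := by
    refine setIntegral_congr_fun measurableSet_Ioi (fun x hx => ?_)
    rw [rpow_natCast, rpow_two, neg_div, neg_mul, div_eq_inv_mul]
  rw [hcong, h]
  have hpos : (0:ℝ) < Real.sqrt 2 * σ := by positivity
  have hsq : (Real.sqrt 2 * σ) ^ (2:ℝ) = 2 * σ ^ 2 := by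
    rw [rpow_two, mul_pow, sq_sqrt (by norm_num : (0:ℝ) ≤ 2)]
  have hkey : ((2 * σ ^ 2)⁻¹ : ℝ) ^ (-((k:ℝ) + 1) / 2) = (Real.sqrt 2 * σ) ^ (k + 1) := by
    rw [inv_rpow (by positivity), ← rpow_neg (by positivity), neg_div, neg_neg,
      show (2 * σ ^ 2 : ℝ) = (Real.sqrt 2 * σ) ^ (2:ℝ) from hsq.symm,
      ← rpow_natCast (Real.sqrt 2 * σ) (k+1), ← rpow_mul hpos.le]
    push_cast
    congr 1
    ring
  rw [hkey]; ring

lemma int_mom (σ : ℝ) (hσ : 0 < σ) (k : ℕ) :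
    IntegrableOn (fun t : ℝ => t ^ k * Real.exp (-t ^ 2 / (2 * σ ^ 2))) (Ioi 0) := by
  have hb : (0:ℝ) < (2 * σ ^ 2)⁻¹ := by positivity
  have hk : (-1:ℝ) < (k:ℝ) := by
    have := Nat.cast_nonneg (α := ℝ) k; linarith
  refine (integrableOn_rpow_mul_exp_neg_mul_sq hb hk).congr_fun
    (fun x hx => ?_) measurableSet_Ioi
  dsimp only
  rw [rpow_natCast]
  ring_nf

lemma int_shift (σ R : ℝ) (hσ : 0 < σ) (n : ℕ) :
    IntegrableOn (fun t : ℝ => (t + R) ^ n * Real.exp (-t ^ 2 / (2 * σ ^ 2))) (Ioi 0) := by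
  have : ∀ t : ℝ, (t + R) ^ n * Real.exp (-t ^ 2 / (2 * σ ^ 2)) =
      ∑ i ∈ Finset.range (n + 1),
        R ^ (n - i) * (n.choose i : ℝ) * (t ^ i * Real.exp (-t ^ 2 / (2 * σ ^ 2))) := by
    intro t
    rw [add_pow, Finset.sum_mul]
    exact Finset.sum_congr rfl fun i _ => by ring
  simp_rw [this]
  exact integrable_finset_sum _ fun i _ => ((int_mom σ hσ i).const_mul _)

lemma tail_integral (σ R : ℝ) (hσ : 0 < σ) (n : ℕ) :
    ∫ y in Ioi R, y ^ n * Real.exp (-(y - R) ^ 2 / (2 * σ ^ 2)) =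
      ∑ i ∈ Finset.range (n + 1),
        R ^ (n - i) * (n.choose i : ℝ) *
          (Real.Gamma (((i:ℝ) + 1) / 2) * (Real.sqrt 2 * σ) ^ (i + 1) * (1 / 2)) := by
  have hmp := (measurePreserving_add_right (volume : Measure ℝ) R).setIntegral_preimage_emb
    (measurableEmbedding_addRight R)
    (fun y => y ^ n * Real.exp (-(y - R) ^ 2 / (2 * σ ^ 2))) (Ioi R)
  have hpre : (fun x : ℝ => x + R) ⁻¹' Ioi R = Set.Ioi 0 := by
    ext x; simp [Set.mem_preimage]
  rw [hpre] at hmp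
  rw [← hmp]
  have : ∫ t in Ioi (0:ℝ), (t + R) ^ n * Real.exp (-(t + R - R) ^ 2 / (2 * σ ^ 2)) =
      ∫ t in Ioi (0:ℝ), (t + R) ^ n * Real.exp (-t ^ 2 / (2 * σ ^ 2)) := by
    refine setIntegral_congr_fun measurableSet_Ioi (fun t _ => by rw [add_sub_cancel_right])
  rw [this]
  have hexp : ∀ t : ℝ, (t + R) ^ n * Real.exp (-t ^ 2 / (2 * σ ^ 2)) =
      ∑ i ∈ Finset.range (n + 1),
        R ^ (n - i) * (n.choose i : ℝ) * (t ^ i * Real.exp (-t ^ 2 / (2 * σ ^ 2))) := by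
    intro t
    rw [add_pow, Finset.sum_mul]
    exact Finset.sum_congr rfl fun i _ => by ring
  simp_rw [hexp]
  rw [integral_finset_sum _ fun i _ => ((int_mom σ hσ i).const_mul _)]
  refine Finset.sum_congr rfl fun i _ => ?_
  rw [integral_const_mul, gauss_moment σ hσ i]

lemma tail_integrable (σ R : ℝ) (hσ : 0 < σ) (n : ℕ) :
    IntegrableOn (fun y : ℝ => y ^ n * Real.exp (-(y - R) ^ 2 / (2 * σ ^ 2))) (Set.Ioi R) := by
  rw [← (measurePreserving_add_right (volume : Measure ℝ) R).integrableOn_comp_preimage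
    (measurableEmbedding_addRight R)]
  have hpre : (fun x : ℝ => x + R) ⁻¹' Set.Ioi R = Set.Ioi 0 := by
    ext x; simp [Set.mem_preimage]
  rw [hpre]
  refine (int_shift σ R hσ n).congr_fun (fun t _ => ?_) measurableSet_Ioi
  simp [Function.comp]

/-- The integral over ℝ^p of the pointwise supremum of Gaussian densities
with centres in the ball of radius R. -/
theorem integral_sup_gaussian_densities (p : ℕ) (hp : 1 ≤ p) (σ R : ℝ)
    (hσ : 0 < σ) (hR : 0 < R) :
    ∫ y : EuclideanSpace ℝ (Fin p),
        (2 * Real.pi * σ ^ 2) ^ (-(p : ℝ) / 2) *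
          Real.exp (-(max (‖y‖ - R) 0) ^ 2 / (2 * σ ^ 2)) =
      (2 * Real.pi * σ ^ 2) ^ (-(p : ℝ) / 2) *
          (Real.pi ^ ((p : ℝ) / 2) * R ^ p / Real.Gamma ((p : ℝ) / 2 + 1)) +
      (2 * Real.pi * σ ^ 2) ^ (-(p : ℝ) / 2) *
          (2 * Real.pi ^ ((p : ℝ) / 2) / Real.Gamma ((p : ℝ) / 2)) *
          ((1 / 2) * ∑ i ∈ Finset.range p,
            Real.Gamma (((p : ℝ) - i) / 2) * (Real.sqrt 2 * σ) ^ (p - i) *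
              ((p - 1).choose i) * R ^ i) := by
  have hppos : 0 < p := hp
  haveI : Nonempty (Fin p) := ⟨⟨0, hppos⟩⟩
  set c : ℝ := (2 * Real.pi * σ ^ 2) ^ (-(p : ℝ) / 2) with hc
  set S : ℝ := ∑ i ∈ Finset.range p,
      Real.Gamma (((p : ℝ) - i) / 2) * (Real.sqrt 2 * σ) ^ (p - i) *
        ((p - 1).choose i) * R ^ i with hS
  -- step 1 : reduce to a 1-dimensional integral
  have key : (∫ y : EuclideanSpace ℝ (Fin p),
      c * Real.exp (-(max (‖y‖ - R) 0) ^ 2 / (2 * σ ^ 2))) =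
      (p : ℝ) * ((volume (Metric.ball (0 : EuclideanSpace ℝ (Fin p)) 1)).toReal *
        ∫ r in Set.Ioi (0:ℝ), r ^ (p - 1) *
          (c * Real.exp (-(max (r - R) 0) ^ 2 / (2 * σ ^ 2)))) := by
    have h := MeasureTheory.integral_fun_norm_addHaar
      (volume : Measure (EuclideanSpace ℝ (Fin p)))
      (fun r : ℝ => c * Real.exp (-(max (r - R) 0) ^ 2 / (2 * σ ^ 2)))
    simpa [finrank_euclideanSpace_fin, smul_eq_mul, mul_assoc, measureReal_def] using h
  rw [key]
  -- step 2 : volume of the unit ball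
  have hV : (volume (Metric.ball (0 : EuclideanSpace ℝ (Fin p)) 1)).toReal =
      Real.sqrt Real.pi ^ p / Real.Gamma ((p : ℝ) / 2 + 1) := by
    have hΓ : 0 < Real.Gamma ((p : ℝ) / 2 + 1) :=
      Real.Gamma_pos_of_pos (by positivity)
    rw [EuclideanSpace.volume_ball]
    rw [ENNReal.toReal_mul, ENNReal.toReal_pow, ENNReal.toReal_ofReal one_pos.le,
      ENNReal.toReal_ofReal (by positivity)]
    simp [Fintype.card_fin]
  -- step 3 : pull out the constant and split the 1-d integral
  have hpull : (∫ r in Set.Ioi (0:ℝ), r ^ (p - 1) *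
      (c * Real.exp (-(max (r - R) 0) ^ 2 / (2 * σ ^ 2)))) =
      c * ∫ r in Set.Ioi (0:ℝ), r ^ (p - 1) *
        Real.exp (-(max (r - R) 0) ^ 2 / (2 * σ ^ 2)) := by
    rw [← integral_const_mul]
    exact setIntegral_congr_fun measurableSet_Ioi fun r _ => by ring
  rw [hpull, hV]
  have hcont : Continuous (fun r : ℝ => r ^ (p - 1) *
      Real.exp (-(max (r - R) 0) ^ 2 / (2 * σ ^ 2))) := by
    exact (continuous_pow _).mul
      ((((((continuous_id.sub continuous_const).max continuous_const).pow 2).neg).div_const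
        _).rexp)
  have h2 : IntegrableOn (fun r : ℝ => r ^ (p - 1) *
      Real.exp (-(max (r - R) 0) ^ 2 / (2 * σ ^ 2))) (Set.Ioi R) := by
    refine (tail_integrable σ R hσ (p - 1)).congr_fun (fun r hr => ?_) measurableSet_Ioi
    rw [max_eq_left (by simp at hr; linarith)]
  have hsplit : (∫ r in Set.Ioi (0:ℝ), r ^ (p - 1) *
      Real.exp (-(max (r - R) 0) ^ 2 / (2 * σ ^ 2))) =
      (∫ r in Set.Ioc (0:ℝ) R, r ^ (p - 1) *
        Real.exp (-(max (r - R) 0) ^ 2 / (2 * σ ^ 2))) +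
      ∫ r in Set.Ioi R, r ^ (p - 1) *
        Real.exp (-(max (r - R) 0) ^ 2 / (2 * σ ^ 2)) := by
    rw [← Set.Ioc_union_Ioi_eq_Ioi hR.le]
    exact setIntegral_union (Set.Ioc_disjoint_Ioi le_rfl) measurableSet_Ioi
      (hcont.integrableOn_Ioc) h2
  -- step 4 : the inner piece
  have hinner : (∫ r in Set.Ioc (0:ℝ) R, r ^ (p - 1) *
      Real.exp (-(max (r - R) 0) ^ 2 / (2 * σ ^ 2))) = R ^ p / p := by
    have : (∫ r in Set.Ioc (0:ℝ) R, r ^ (p - 1) *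
        Real.exp (-(max (r - R) 0) ^ 2 / (2 * σ ^ 2))) =
        ∫ r in Set.Ioc (0:ℝ) R, r ^ (p - 1) := by
      refine setIntegral_congr_fun measurableSet_Ioc (fun r hr => ?_)
      rw [max_eq_right (by simp at hr; linarith)]
      simp
    rw [this, ← intervalIntegral.integral_of_le hR.le, integral_pow,
      Nat.sub_add_cancel hp, zero_pow hppos.ne']
    rw [Nat.cast_sub hp]
    norm_num
  -- step 5 : the tail piece
  have htail : (∫ r in Set.Ioi R, r ^ (p - 1) *
      Real.exp (-(max (r - R) 0) ^ 2 / (2 * σ ^ 2))) = (1 / 2) * S := by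
    have heq : (∫ r in Set.Ioi R, r ^ (p - 1) *
        Real.exp (-(max (r - R) 0) ^ 2 / (2 * σ ^ 2))) =
        ∫ r in Set.Ioi R, r ^ (p - 1) * Real.exp (-(r - R) ^ 2 / (2 * σ ^ 2)) := by
      refine setIntegral_congr_fun measurableSet_Ioi (fun r hr => ?_)
      rw [max_eq_left (by simp at hr; linarith)]
    rw [heq, tail_integral σ R hσ (p - 1), Nat.sub_add_cancel hp, hS, Finset.mul_sum,
      ← Finset.sum_range_reflect]
    refine Finset.sum_congr rfl fun i hi => ?_
    have hi' : i < p := Finset.mem_range.mp hi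
    have hile : i ≤ p - 1 := by omega
    have h1 : p - 1 - (p - 1 - i) = i := by omega
    have h2 : p - 1 - i + 1 = p - i := by omega
    have h3 : ((p - 1 - i : ℕ) : ℝ) + 1 = ((p : ℝ) - i) := by
      have he : p - 1 - i = p - (i + 1) := by omega
      rw [he, Nat.cast_sub (by omega)]
      push_cast; ring
    rw [h1, h2, h3, Nat.choose_symm hile]
    ring
  rw [hsplit, hinner, htail]
  -- step 6 : final algebra
  have hπ : Real.sqrt Real.pi ^ p = Real.pi ^ ((p : ℝ) / 2) := by
    rw [Real.sqrt_eq_rpow, ← Real.rpow_natCast (Real.pi ^ ((1:ℝ)/2)) p,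
      ← Real.rpow_mul Real.pi_pos.le]
    congr 1; ring
  have hΓ : Real.Gamma ((p : ℝ) / 2 + 1) = ((p : ℝ) / 2) * Real.Gamma ((p : ℝ) / 2) :=
    Real.Gamma_add_one (by positivity)
  have hΓpos : 0 < Real.Gamma ((p : ℝ) / 2) := Real.Gamma_pos_of_pos (by positivity)
  have hppos' : (0:ℝ) < p := by exact_mod_cast hppos
  rw [hπ, hΓ]
  field_simp
end

section
/- If C_Bayes(D) = 1 for a channel D on finite sets (i.e., the Bayes' capacity equals its minimum possible value), then all rows of D are identical, i.e., D leaks no information. -/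
open Finset

/-- If the Bayes' capacity of a channel is 1, then all its rows are identical. -/
theorem bayes_capacity_eq_one_rows_identical
    {X Y : Type*} [Fintype X] [Fintype Y] [Nonempty X] [Nonempty Y]
    (D : X → Y → ℝ) (h0 : ∀ x y, 0 ≤ D x y) (hrow : ∀ x, ∑ y, D x y = 1)
    (hB : ∑ y, ⨆ x, D x y = 1) :
    ∀ x x' y, D x y = D x' y := by
  have key : ∀ x y, D x y = ⨆ x', D x' y := by
    intro x y
    have hle : ∀ z, D x z ≤ ⨆ x', D x' z := fun z =>
      le_ciSup (Set.Finite.bddAbove (Set.finite_range (fun x' => D x' z))) x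
    have hsum : ∑ y, ((⨆ x', D x' y) - D x y) = 0 := by
      rw [Finset.sum_sub_distrib, hB, hrow, sub_self]
    have := (Finset.sum_eq_zero_iff_of_nonneg
      (fun y _ => sub_nonneg.mpr (hle y))).mp hsum y (Finset.mem_univ y)
    linarith [sub_eq_zero.mp this]
  intro x x' y
  rw [key x y, key x' y]
end

section
/- For channels C : X × Z → [0,1] and D : Z × Y → [0,1] on finite sets, the Bayes' capacity of the composition satisfies C_Bayes(C·D) ≤ min(C_Bayes(C), C_Bayes(D)) ... in particular C_Bayes(C·D) ≤ C_Bayes(D). -/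
open Finset

/-- Data-processing inequality for Bayes' capacity:
the capacity of a composed channel is at most that of the second channel. -/
theorem bayes_capacity_comp_le
    {X Z Y : Type*} [Fintype X] [Fintype Z] [Fintype Y]
    [Nonempty X] [Nonempty Z] [Nonempty Y]
    (C : X → Z → ℝ) (D : Z → Y → ℝ)
    (hC0 : ∀ x z, 0 ≤ C x z) (hCrow : ∀ x, ∑ z, C x z = 1)
    (hD0 : ∀ z y, 0 ≤ D z y) (hDrow : ∀ z, ∑ y, D z y = 1) :
    ∑ y, ⨆ x, ∑ z, C x z * D z y ≤ ∑ y, ⨆ z, D z y := by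
  refine Finset.sum_le_sum fun y _ => ?_
  refine ciSup_le fun x => ?_
  calc ∑ z, C x z * D z y ≤ ∑ z, C x z * (⨆ z', D z' y) := by
        refine Finset.sum_le_sum fun z _ => ?_
        exact mul_le_mul_of_nonneg_left
          (le_ciSup (f := fun z' => D z' y) (Set.Finite.bddAbove (Set.finite_range _)) z) (hC0 x z)
    _ = ⨆ z', D z' y := by rw [← Finset.sum_mul, hCrow, one_mul]
end
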